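/- Let K = conv{M_1,…,M_k} ⊆ ℝ^d with diameter Δ, let u be a unit vector, and suppose u·M_ℓ > u·M_{ℓ'} + cεΔ/(8δ²) for all ℓ' ≠ ℓ. Let x = Σ_{ℓ'} λ_{ℓ'} M_{ℓ'} + z with λ a convex combination, |z| ≤ εΔ, and u·x ≥ u·M_ℓ − εΔ. Then 1 − λ_ℓ ≤ 16δ²/c, and consequently |x − M_ℓ| ≤ (16δ²/c)·Δ + εΔ. -/

import Mathlib

/-!
Every unit of weight that `λ` puts off the separated vertex `M ℓ` costs at least the margin `m = cεΔ/(8δ²)` in `u`-value, while the perturbation `z` and the oracle's slack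
lose at most `εΔ` each; hence `(1 - λ ℓ) m ≤ 2εΔ`, which is `1 - λ ℓ ≤ 16δ²/c`. The distance bound
follows since `x - M ℓ = Σ λ ℓ' (M ℓ' - M ℓ) + z`, where only the weight `1 - λ ℓ` multiplies
nonzero differences, each of length at most `Δ`.
-/

open RealInnerProductSpace Finset

section ConvexWeights

variable {ι : Type*} [Fintype ι]

theorem sum_smul_sub_eq_sum_smul_sub {R E : Type*} [Ring R] [AddCommGroup E] [Module R E]
    {w : ι → R} (hw1 : ∑ i, w i = 1) (v : ι → E) (j : ι) :
    ∑ i, w i • v i - v j = ∑ i, w i • (v i - v j) := by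
  simp only [smul_sub, sum_sub_distrib, ← sum_smul, hw1, one_smul]

variable [DecidableEq ι] {w : ι → ℝ}

theorem sum_mul_le_one_sub_mul (hw0 : ∀ i, 0 ≤ w i) (hw1 : ∑ i, w i = 1) {g : ι → ℝ} {D : ℝ}
    {j : ι} (hgj : g j = 0) (hg : ∀ i, i ≠ j → g i ≤ D) :
    ∑ i, w i * g i ≤ (1 - w j) * D := by
  have hrest : ∑ i ∈ univ.erase j, w i = 1 - w j := by
    rw [sum_erase_eq_sub (mem_univ j), hw1]
  calc ∑ i, w i * g i = ∑ i ∈ univ.erase j, w i * g i := by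
        rw [← add_sum_erase _ _ (mem_univ j), hgj, mul_zero, zero_add]
    _ ≤ ∑ i ∈ univ.erase j, w i * D :=
        sum_le_sum fun i hi => mul_le_mul_of_nonneg_left (hg i (ne_of_mem_erase hi)) (hw0 i)
    _ = (1 - w j) * D := by rw [← sum_mul, hrest]

theorem one_sub_mul_le_of_sum_mul_ge (hw0 : ∀ i, 0 ≤ w i) (hw1 : ∑ i, w i = 1) {f : ι → ℝ}
    {m η : ℝ} {j : ι} (hmargin : ∀ i, i ≠ j → f i + m ≤ f j) (hopt : f j - η ≤ ∑ i, w i * f i) :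
    (1 - w j) * m ≤ η := by
  have hloss : ∑ i, w i * f i - f j ≤ (1 - w j) * -m := by
    have hshift := sum_smul_sub_eq_sum_smul_sub hw1 f j
    simp only [smul_eq_mul] at hshift
    rw [hshift]
    exact sum_mul_le_one_sub_mul hw0 hw1 (sub_self _) fun i hi => by linarith [hmargin i hi]
  linarith

theorem norm_sum_smul_sub_le {E : Type*} [SeminormedAddCommGroup E] [NormedSpace ℝ E]
    (hw0 : ∀ i, 0 ≤ w i) (hw1 : ∑ i, w i = 1) {v : ι → E} {D : ℝ} (j : ι)
    (hv : ∀ i, ‖v i - v j‖ ≤ D) :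
    ‖∑ i, w i • v i - v j‖ ≤ (1 - w j) * D := by
  rw [sum_smul_sub_eq_sum_smul_sub hw1]
  calc ‖∑ i, w i • (v i - v j)‖ ≤ ∑ i, w i * ‖v i - v j‖ := by
        refine (norm_sum_le _ _).trans_eq (sum_congr rfl fun i _ => ?_)
        rw [norm_smul, Real.norm_of_nonneg (hw0 i)]
    _ ≤ (1 - w j) * D :=
        sum_mul_le_one_sub_mul hw0 hw1 (by rw [sub_self, norm_zero]) fun i _ => hv i

end ConvexWeights

/-- If the direction `u` separates vertex `M_ℓ` from the other vertices with margin
`cεΔ/(8δ²)`, and `x = Σ λ_{ℓ'} M_{ℓ'} + z` is an `ε`-approximate maximizer of `u`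
over `K` with `‖z‖ ≤ εΔ`, then `1 - λ_ℓ ≤ 16δ²/c` and `‖x - M_ℓ‖ ≤ (16δ²/c)Δ + εΔ`. -/
theorem stmt_12 {d k : ℕ} (M : Fin k → EuclideanSpace ℝ (Fin d)) (ε δ c Δ : ℝ)
    (hε : ε ∈ Set.Ioo (0 : ℝ) 1) (hδ : δ ∈ Set.Ioo (0 : ℝ) 1) (hc : 0 < c)
    (hΔ0 : 0 < Δ) (hΔ : Metric.diam (convexHull ℝ (Set.range M)) ≤ Δ)
    (u : EuclideanSpace ℝ (Fin d)) (hu : ‖u‖ = 1) (ℓ : Fin k)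
    (hmargin : ∀ ℓ', ℓ' ≠ ℓ → ⟪u, M ℓ'⟫ + c * ε * Δ / (8 * δ ^ 2) < ⟪u, M ℓ⟫)
    (lam : Fin k → ℝ) (hlam0 : ∀ ℓ', 0 ≤ lam ℓ') (hlam1 : ∑ ℓ', lam ℓ' = 1)
    (z x : EuclideanSpace ℝ (Fin d)) (hz : ‖z‖ ≤ ε * Δ)
    (hx : x = (∑ ℓ', lam ℓ' • M ℓ') + z)
    (hopt : ⟪u, M ℓ⟫ - ε * Δ ≤ ⟪u, x⟫) :
    1 - lam ℓ ≤ 16 * δ ^ 2 / c ∧ ‖x - M ℓ‖ ≤ 16 * δ ^ 2 / c * Δ + ε * Δ := by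
  obtain ⟨hε0, -⟩ := hε
  obtain ⟨hδ0, -⟩ := hδ
  have hm0 : 0 < c * ε * Δ / (8 * δ ^ 2) := by positivity
  have hzu : ⟪u, z⟫ ≤ ε * Δ := (real_inner_le_norm u z).trans (by rwa [hu, one_mul])
  have hgap : (1 - lam ℓ) * (c * ε * Δ / (8 * δ ^ 2)) ≤ 2 * (ε * Δ) := by
    refine one_sub_mul_le_of_sum_mul_ge hlam0 hlam1 (fun i hi => (hmargin i hi).le) ?_
    rw [hx, inner_add_right, inner_sum] at hopt
    simp only [real_inner_smul_right] at hopt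
    linarith
  have hweight : 1 - lam ℓ ≤ 16 * δ ^ 2 / c := by
    rw [← le_div_iff₀ hm0] at hgap
    refine hgap.trans_eq ?_
    field_simp
    ring
  have hdiam : ∀ i, ‖M i - M ℓ‖ ≤ Δ := fun i => by
    rw [← dist_eq_norm]
    refine (Metric.dist_le_diam_of_mem (Set.finite_range M).isBounded ⟨i, rfl⟩ ⟨ℓ, rfl⟩).trans ?_
    rwa [← convexHull_diam]
  refine ⟨hweight, ?_⟩
  calc ‖x - M ℓ‖ = ‖(∑ i, lam i • M i - M ℓ) + z‖ := by rw [hx, add_sub_right_comm]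
    _ ≤ (1 - lam ℓ) * Δ + ε * Δ := (norm_add_le _ _).trans (add_le_add
        (norm_sum_smul_sub_le hlam0 hlam1 ℓ hdiam) hz)
    _ ≤ 16 * δ ^ 2 / c * Δ + ε * Δ := by gcongr
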